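/- (Ranged dwell-time.) Let 0 < T_min ≤ T_max < ∞ and let A, J be real n×n matrices. Suppose there exists a real symmetric positive definite n×n matrix P such that ℐ(P,A,J,θ) is negative definite for every θ ∈ [T_min, T_max]. Then there exists ρ ∈ [0,1) such that Jᵀ·exp(θ·Aᵀ)·P·exp(θ·A)·J ⪯ ρ·P for all θ ∈ [T_min, T_max], and consequently for every sequence (T_k)_{k∈ℕ} with T_k ∈ [T_min, T_max] for all k and every x₀ ∈ ℝⁿ, the sequence defined by x_{k+1} = exp(T_k·A)·J·x_k, x_0 = x₀, satisfies x_kᵀP x_k ≤ ρᵏ·x₀ᵀP x₀ for all k, and hence x_k → 0 as k → ∞. -/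

import Mathlib

/-!
On the compact set `[T_min, T_max] × (unit sphere)` the relative decrease
`(V x - V (e^{θA} J x)) / V x` of `V x = xᵀPx` is positive and continuous, hence bounded below
by some `ε > 0`; by homogeneity this gives `V (e^{θA} J x) ≤ (1 - ε) V x` for all `x`.
Iterating, `V (x_k) ≤ ρᵏ V (x₀)`, and since `V` dominates a multiple of `‖x‖²`, `x_k → 0`.
-/

open Matrix Filter

/-- Matrix exponential of a real square matrix. -/
noncomputable def mexp {n : ℕ} (A : Matrix (Fin n) (Fin n) ℝ) : Matrix (Fin n) (Fin n) ℝ :=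
  NormedSpace.exp A

/-- ℐ(P,A,J,T) := Jᵀ·exp(T·Aᵀ)·P·exp(T·A)·J − P. -/
noncomputable def scrI {n : ℕ} (P A J : Matrix (Fin n) (Fin n) ℝ) (T : ℝ) :
    Matrix (Fin n) (Fin n) ℝ :=
  Jᵀ * mexp (T • Aᵀ) * P * mexp (T • A) * J - P

/-- xᵀMx < 0 for all x ≠ 0. -/
def negDef {m : Type*} [Fintype m] (M : Matrix m m ℝ) : Prop :=
  ∀ x : m → ℝ, x ≠ 0 → x ⬝ᵥ M.mulVec x < 0

/-- xᵀMx > 0 for all x ≠ 0. -/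
def posDef {m : Type*} [Fintype m] (M : Matrix m m ℝ) : Prop :=
  ∀ x : m → ℝ, x ≠ 0 → 0 < x ⬝ᵥ M.mulVec x

/-- xᵀMx ≥ 0 for all x. -/
def posSemidef {m : Type*} [Fintype m] (M : Matrix m m ℝ) : Prop :=
  ∀ x : m → ℝ, 0 ≤ x ⬝ᵥ M.mulVec x

section QuadraticForm

variable {m : Type*} [Fintype m]

lemma smul_dotProduct_mulVec_smul (M : Matrix m m ℝ) (c : ℝ) (x : m → ℝ) :
    (c • x) ⬝ᵥ M *ᵥ (c • x) = c ^ 2 * (x ⬝ᵥ M *ᵥ x) := by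
  simp only [mulVec_smul, smul_dotProduct, dotProduct_smul, smul_eq_mul]
  ring

lemma dotProduct_transpose_mul_mul_mulVec (P S : Matrix m m ℝ) (x : m → ℝ) :
    x ⬝ᵥ (Sᵀ * P * S) *ᵥ x = (S *ᵥ x) ⬝ᵥ P *ᵥ (S *ᵥ x) := by
  rw [← mulVec_mulVec, ← mulVec_mulVec, dotProduct_mulVec, vecMul_transpose]

lemma mul_norm_sq_le_of_forall_sphere {M : Matrix m m ℝ} {c : ℝ}
    (h : ∀ y ∈ Metric.sphere (0 : m → ℝ) 1, c ≤ y ⬝ᵥ M *ᵥ y) (x : m → ℝ) :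
    c * ‖x‖ ^ 2 ≤ x ⬝ᵥ M *ᵥ x := by
  rcases eq_or_ne x 0 with rfl | hx
  · simp
  have hy : ‖x‖⁻¹ • x ∈ Metric.sphere (0 : m → ℝ) 1 := by
    simpa using norm_smul_inv_norm (𝕜 := ℝ) hx
  have hx_eq : x = ‖x‖ • ‖x‖⁻¹ • x := by
    rw [smul_smul, mul_inv_cancel₀ (norm_ne_zero_iff.mpr hx), one_smul]
  calc c * ‖x‖ ^ 2 ≤ ‖x‖ ^ 2 * ((‖x‖⁻¹ • x) ⬝ᵥ M *ᵥ (‖x‖⁻¹ • x)) := by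
        rw [mul_comm]; gcongr; exact h _ hy
    _ = x ⬝ᵥ M *ᵥ x := by rw [← smul_dotProduct_mulVec_smul, ← hx_eq]

lemma posDef.nonneg {P : Matrix m m ℝ} (hP : posDef P) (x : m → ℝ) : 0 ≤ x ⬝ᵥ P *ᵥ x := by
  rcases eq_or_ne x 0 with rfl | hx
  · simp
  · exact (hP x hx).le

lemma posDef.exists_pos_mul_norm_sq_le {P : Matrix m m ℝ} (hP : posDef P) :
    ∃ μ > 0, ∀ x : m → ℝ, μ * ‖x‖ ^ 2 ≤ x ⬝ᵥ P *ᵥ x := by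
  obtain ⟨μ, hμ, hμP⟩ := (isCompact_sphere (0 : m → ℝ) 1).exists_forall_le'
    (by fun_prop : Continuous fun y : m → ℝ => y ⬝ᵥ P *ᵥ y).continuousOn
    fun y hy => hP y (ne_zero_of_mem_unit_sphere ⟨y, hy⟩)
  exact ⟨μ, hμ, mul_norm_sq_le_of_forall_sphere hμP⟩

lemma posDef.tendsto_nhds_zero {P : Matrix m m ℝ} (hP : posDef P) {x : ℕ → m → ℝ}
    (hx : Tendsto (fun k => x k ⬝ᵥ P *ᵥ x k) atTop (nhds 0)) : Tendsto x atTop (nhds 0) := by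
  obtain ⟨μ, hμ, hμP⟩ := hP.exists_pos_mul_norm_sq_le
  have hsq : Tendsto (fun k => ‖x k‖ ^ 2) atTop (nhds 0) := by
    refine squeeze_zero (fun k => sq_nonneg _) (fun k => ?_) (by simpa using hx.div_const μ)
    rw [le_div_iff₀ hμ, mul_comm]
    exact hμP (x k)
  refine tendsto_zero_iff_norm_tendsto_zero.mpr ?_
  simpa [Real.sqrt_sq, norm_nonneg] using hsq.sqrt

lemma dotProduct_smul_sub_transpose_mul_mul_mulVec (P S : Matrix m m ℝ) (ρ : ℝ) (x : m → ℝ) :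
    x ⬝ᵥ (ρ • P - Sᵀ * P * S) *ᵥ x = ρ * (x ⬝ᵥ P *ᵥ x) - (S *ᵥ x) ⬝ᵥ P *ᵥ (S *ᵥ x) := by
  rw [sub_mulVec, dotProduct_sub, smul_mulVec, dotProduct_smul, smul_eq_mul,
    dotProduct_transpose_mul_mul_mulVec]

lemma posSemidef_smul_sub_transpose_mul_mul_iff {P S : Matrix m m ℝ} {ρ : ℝ} :
    posSemidef (ρ • P - Sᵀ * P * S) ↔ ∀ x, (S *ᵥ x) ⬝ᵥ P *ᵥ (S *ᵥ x) ≤ ρ * (x ⬝ᵥ P *ᵥ x) :=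
  forall_congr' fun x => by rw [dotProduct_smul_sub_transpose_mul_mul_mulVec, sub_nonneg]

lemma posSemidef_of_forall_sphere {M : Matrix m m ℝ}
    (h : ∀ y ∈ Metric.sphere (0 : m → ℝ) 1, 0 ≤ y ⬝ᵥ M *ᵥ y) : posSemidef M :=
  fun x => by simpa using mul_norm_sq_le_of_forall_sphere h x

lemma posDef.exists_uniform_contraction {ι : Type*} [TopologicalSpace ι] {K : Set ι}
    (hK : IsCompact K) {Φ : ι → Matrix m m ℝ} (hΦ : Continuous Φ) {P : Matrix m m ℝ}
    (hP : posDef P)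
    (hdec : ∀ θ ∈ K, ∀ x ≠ 0, (Φ θ *ᵥ x) ⬝ᵥ P *ᵥ (Φ θ *ᵥ x) < x ⬝ᵥ P *ᵥ x) :
    ∃ ρ : ℝ, 0 ≤ ρ ∧ ρ < 1 ∧ ∀ θ ∈ K, posSemidef (ρ • P - (Φ θ)ᵀ * P * Φ θ) := by
  set S := Metric.sphere (0 : m → ℝ) 1
  have hS_ne_zero : ∀ y ∈ S, y ≠ 0 := fun y hy => ne_zero_of_mem_unit_sphere ⟨y, hy⟩
  let gap : ι × (m → ℝ) → ℝ := fun p =>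
    (p.2 ⬝ᵥ P *ᵥ p.2 - (Φ p.1 *ᵥ p.2) ⬝ᵥ P *ᵥ (Φ p.1 *ᵥ p.2)) / (p.2 ⬝ᵥ P *ᵥ p.2)
  have hgap : ContinuousOn gap (K ×ˢ S) :=
    ContinuousOn.div (by fun_prop) (by fun_prop) fun p hp => (hP _ (hS_ne_zero _ hp.2)).ne'
  obtain ⟨ε, hε, hεgap⟩ := (hK.prod (isCompact_sphere 0 1)).exists_forall_le' hgap
    fun p hp => div_pos (sub_pos.mpr (hdec _ hp.1 _ (hS_ne_zero _ hp.2)))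
      (hP _ (hS_ne_zero _ hp.2))
  refine ⟨max (1 - ε) 0, le_max_right _ _, max_lt (by linarith) one_pos, fun θ hθ => ?_⟩
  refine posSemidef_of_forall_sphere fun y hy => ?_
  have hPy := hP y (hS_ne_zero y hy)
  have hgap_y := (le_div_iff₀ hPy).mp (hεgap (θ, y) ⟨hθ, hy⟩)
  rw [dotProduct_smul_sub_transpose_mul_mul_mulVec, sub_nonneg]
  have hρ := mul_le_mul_of_nonneg_right (le_max_left (1 - ε) 0) hPy.le
  linarith

lemma dotProduct_mulVec_le_geom {P : Matrix m m ℝ} {ρ : ℝ} (hρ : 0 ≤ ρ) {Φ : ℕ → Matrix m m ℝ}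
    (hΦ : ∀ k, posSemidef (ρ • P - (Φ k)ᵀ * P * Φ k)) {x : ℕ → m → ℝ}
    (hx : ∀ k, x (k + 1) = Φ k *ᵥ x k) (k : ℕ) :
    x k ⬝ᵥ P *ᵥ x k ≤ ρ ^ k * (x 0 ⬝ᵥ P *ᵥ x 0) :=
  le_geom (u := fun k => x k ⬝ᵥ P *ᵥ x k) hρ k fun j _ => by
    simpa only [hx j] using posSemidef_smul_sub_transpose_mul_mul_iff.mp (hΦ j) (x j)

end QuadraticForm

lemma mexp_smul_transpose {n : ℕ} (A : Matrix (Fin n) (Fin n) ℝ) (θ : ℝ) :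
    mexp (θ • Aᵀ) = (mexp (θ • A))ᵀ := by
  rw [mexp, mexp, ← transpose_smul, Matrix.exp_transpose]

lemma continuous_mexp_smul {n : ℕ} (A : Matrix (Fin n) (Fin n) ℝ) :
    Continuous fun θ : ℝ => mexp (θ • A) := by
  -- `NormedSpace.exp` does not depend on the norm, so any normed-algebra structure will do.
  let : NormedRing (Matrix (Fin n) (Fin n) ℝ) := Matrix.linftyOpNormedRing
  let : NormedAlgebra ℝ (Matrix (Fin n) (Fin n) ℝ) := Matrix.linftyOpNormedAlgebra
  let +nondep : NormedAlgebra ℚ (Matrix (Fin n) (Fin n) ℝ) := .restrictScalars ℚ ℝ _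
  exact NormedSpace.exp_continuous.comp (continuous_id.smul continuous_const)

lemma transpose_mul_mexp_mul_mexp_mul {n : ℕ} (P A J : Matrix (Fin n) (Fin n) ℝ) (θ : ℝ) :
    Jᵀ * mexp (θ • Aᵀ) * P * mexp (θ • A) * J =
      (mexp (θ • A) * J)ᵀ * P * (mexp (θ • A) * J) := by
  simp only [transpose_mul, mexp_smul_transpose, Matrix.mul_assoc]

lemma dotProduct_scrI_mulVec {n : ℕ} (P A J : Matrix (Fin n) (Fin n) ℝ) (θ : ℝ)
    (x : Fin n → ℝ) :
    x ⬝ᵥ scrI P A J θ *ᵥ x =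
      ((mexp (θ • A) * J) *ᵥ x) ⬝ᵥ P *ᵥ ((mexp (θ • A) * J) *ᵥ x) - x ⬝ᵥ P *ᵥ x := by
  rw [scrI, transpose_mul_mexp_mul_mexp_mul, sub_mulVec, dotProduct_sub,
    dotProduct_transpose_mul_mul_mulVec]

theorem stmt5_general {n : ℕ} (Tmin Tmax : ℝ)
    (A J : Matrix (Fin n) (Fin n) ℝ)
    (P : Matrix (Fin n) (Fin n) ℝ) (hP : posDef P)
    (hI : ∀ θ ∈ Set.Icc Tmin Tmax, negDef (scrI P A J θ)) :
    ∃ ρ : ℝ, 0 ≤ ρ ∧ ρ < 1 ∧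
      (∀ θ ∈ Set.Icc Tmin Tmax,
        posSemidef (ρ • P - Jᵀ * mexp (θ • Aᵀ) * P * mexp (θ • A) * J)) ∧
      (∀ Tk : ℕ → ℝ, (∀ k, Tk k ∈ Set.Icc Tmin Tmax) →
        ∀ x₀ : Fin n → ℝ, ∀ x : ℕ → Fin n → ℝ, x 0 = x₀ →
          (∀ k, x (k + 1) = (mexp (Tk k • A) * J).mulVec (x k)) →
          (∀ k, (x k) ⬝ᵥ P.mulVec (x k) ≤ ρ ^ k * (x₀ ⬝ᵥ P.mulVec x₀)) ∧
          Tendsto x atTop (nhds 0)) := by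
  simp only [transpose_mul_mexp_mul_mexp_mul]
  obtain ⟨ρ, hρ0, hρ1, hρ⟩ := hP.exists_uniform_contraction isCompact_Icc
    ((continuous_mexp_smul A).mul continuous_const) fun θ hθ x hx => by
      simpa [dotProduct_scrI_mulVec] using hI θ hθ x hx
  refine ⟨ρ, hρ0, hρ1, hρ, fun Tk hTk x₀ x hx₀ hx => ?_⟩
  have hV : ∀ k, x k ⬝ᵥ P *ᵥ x k ≤ ρ ^ k * (x₀ ⬝ᵥ P *ᵥ x₀) := fun k =>
    hx₀ ▸ dotProduct_mulVec_le_geom hρ0 (fun k => hρ (Tk k) (hTk k)) hx k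
  have hV_lim : Tendsto (fun k => ρ ^ k * (x₀ ⬝ᵥ P *ᵥ x₀)) atTop (nhds 0) := by
    simpa using (tendsto_pow_atTop_nhds_zero_of_lt_one hρ0 hρ1).mul_const (x₀ ⬝ᵥ P *ᵥ x₀)
  exact ⟨hV, hP.tendsto_nhds_zero (squeeze_zero (fun k => hP.nonneg _) hV hV_lim)⟩

/-- Ranged dwell-time: if `P ≻ 0` is symmetric and `ℐ(P,A,J,θ) ≺ 0` for all
`θ ∈ [T_min, T_max]`, then there is `ρ ∈ [0,1)` with
`Jᵀ·exp(θ·Aᵀ)·P·exp(θ·A)·J ⪯ ρ·P` on `[T_min, T_max]`, and every impulsive trajectory with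
dwell-times in `[T_min, T_max]` satisfies `x_kᵀPx_k ≤ ρᵏ·x₀ᵀPx₀` and tends to `0`. -/
theorem stmt5 {n : ℕ} (Tmin Tmax : ℝ) (h1 : 0 < Tmin) (h2 : Tmin ≤ Tmax)
    (A J : Matrix (Fin n) (Fin n) ℝ)
    (P : Matrix (Fin n) (Fin n) ℝ) (hPsym : P.IsSymm) (hP : posDef P)
    (hI : ∀ θ ∈ Set.Icc Tmin Tmax, negDef (scrI P A J θ)) :
    ∃ ρ : ℝ, 0 ≤ ρ ∧ ρ < 1 ∧
      (∀ θ ∈ Set.Icc Tmin Tmax,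
        posSemidef (ρ • P - Jᵀ * mexp (θ • Aᵀ) * P * mexp (θ • A) * J)) ∧
      (∀ Tk : ℕ → ℝ, (∀ k, Tk k ∈ Set.Icc Tmin Tmax) →
        ∀ x₀ : Fin n → ℝ, ∀ x : ℕ → Fin n → ℝ, x 0 = x₀ →
          (∀ k, x (k + 1) = (mexp (Tk k • A) * J).mulVec (x k)) →
          (∀ k, (x k) ⬝ᵥ P.mulVec (x k) ≤ ρ ^ k * (x₀ ⬝ᵥ P.mulVec x₀)) ∧
          Tendsto x atTop (nhds 0)) :=
  stmt5_general Tmin Tmax A J P hP hI
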